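/- arXiv:1802.03729 — 2 statements merged into one kernel-verified Lean document; each statement's English description precedes it below -/
import Mathlib

section
/- For every integer k, the congruence (4k+6)·t^k u dt ≡ -(k+3)·t^{k+1} u dt holds modulo dR; that is, in Ω_R/dR the class of (4k+6) t^k u dt equals the class of -(k+3) t^{k+1} u dt. Consequently the class of t^{-k} u dt in Ω_R/dR is zero for every k ≥ 3. -/
noncomputable section

set_option synthInstance.maxHeartbeats 1000000
set_option maxHeartbeats 1000000

open Polynomial

/-- The polynomial `u² - (t² + 4t)` over the Laurent polynomial ring `ℂ[t,t⁻¹]`. -/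
def threePoly : Polynomial (LaurentPolynomial ℂ) :=
  Polynomial.X ^ 2 - Polynomial.C (LaurentPolynomial.T 2 + 4 * LaurentPolynomial.T 1)

/-- The three-point ring `R = ℂ[t, t⁻¹, u | u² = t² + 4t]`, i.e. the quotient of
`ℂ[t,t⁻¹][u]` by the ideal generated by `u² - t² - 4t`. -/
abbrev R3 : Type := AdjoinRoot threePoly

/-- `t^k` in `R3`, for `k : ℤ`. -/
def tp (k : ℤ) : R3 := AdjoinRoot.of threePoly (LaurentPolynomial.T k)

/-- the element `t` of `R`. -/
def tR : R3 := tp 1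

/-- the element `t⁻¹` of `R`. -/
def tInv : R3 := tp (-1)

/-- the element `u` of `R`. -/
def uR : R3 := AdjoinRoot.root threePoly

abbrev ΩR : Type := KaehlerDifferential ℂ R3

/-- the universal derivation `d : R → Ω_R`. -/
def DR : Derivation ℂ R3 ΩR := KaehlerDifferential.D ℂ R3

/-- the `ℂ`-subspace `dR ⊆ Ω_R` of exact differentials. -/
def dRsub : Submodule ℂ ΩR := LinearMap.range (DR.toLinearMap)

/-- the quotient `Ω_R/dR`. -/
abbrev ΩRq : Type := ΩR ⧸ dRsub

/-- the class of an element of `Ω_R` in `Ω_R/dR`. -/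
def clsR (x : ΩR) : ΩRq := Submodule.Quotient.mk (p := dRsub) x

/-- `ω₀`, the class of `t⁻¹ dt`. -/
def ω0 : ΩRq := clsR (tInv • DR tR)

/-- `ω₁`, the class of `t⁻¹u dt`. -/
def ω1 : ΩRq := clsR ((tInv * uR) • DR tR)

/-! Since `u² = t(t + 4)`, differentiating gives `u du = (t + 2) dt`, and hence
`d(t^k u³) = ((4k + 6) t^k + (k + 3) t^{k+1}) u dt`, which is the first congruence.
As `4k + 6` never vanishes, the congruence at `k = -3` kills `t^{-3} u dt`, and descending
induction on the exponent kills `t^{-k} u dt` for all `k ≥ 3`. -/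

namespace Derivation

variable {R A M : Type*} [CommSemiring R] [CommRing A] [Algebra R A] [AddCommGroup M]
  [Module A M] [Module R M] (D : Derivation R A M)

theorem leibniz_units_zpow (x : Aˣ) (n : ℤ) :
    D ↑(x ^ n) = ((n : A) * ↑(x ^ (n - 1))) • D x := by
  have step : ∀ n : ℤ, D ↑(x ^ n) = ((n : A) * ↑(x ^ (n - 1))) • D x ↔
      D ↑(x ^ (n + 1)) = (((n + 1 : ℤ) : A) * ↑(x ^ (n + 1 - 1))) • D x := by
    intro n
    have hx : (x : A) * ↑(x ^ (n - 1)) = ↑(x ^ n) := by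
      rw [← Units.val_mul, ← zpow_one_add, add_sub_cancel]
    rw [zpow_add_one, Units.val_mul, leibniz, add_comm (_ • D x), add_sub_cancel_right,
      Int.cast_add, Int.cast_one, add_one_mul, add_smul, add_right_cancel_iff,
      ← smul_left_cancel_iff x, Units.smul_def, Units.smul_def, smul_smul, mul_left_comm, hx]
  induction n using Int.induction_on with
  | zero => simp
  | succ n ih => exact (step n).1 ih
  | pred n ih => exact (step (-n - 1)).2 (by rwa [sub_add_cancel])

end Derivation

theorem eq_zero_of_smul_recurrence {K V : Type*} [Field K] [CharZero K] [AddCommGroup V]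
    [Module K V] (f : ℤ → V)
    (h : ∀ m : ℤ, ((4 * m + 6 : ℤ) : K) • f m = ((-(m + 3) : ℤ) : K) • f (m + 1))
    (m : ℤ) (hm : m ≤ -3) : f m = 0 := by
  have key : ∀ m : ℤ, ((-(m + 3) : ℤ) : K) • f (m + 1) = 0 → f m = 0 := fun m hm ↦
    (smul_eq_zero.mp ((h m).trans hm)).resolve_left (Int.cast_ne_zero.mpr (by omega))
  induction m, hm using Int.leInductionDown with
  | base => exact key _ (by norm_num)
  | pred n _ ih => exact key _ (by rw [sub_add_cancel, ih, smul_zero])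

lemma tp_add (a b : ℤ) : tp (a + b) = tp a * tp b := by
  rw [tp, LaurentPolynomial.T_add, map_mul]; rfl

lemma tp_zero : tp 0 = 1 := by
  rw [tp, LaurentPolynomial.T_zero, map_one]

lemma tR_mul_tInv : tR * tInv = 1 := by
  rw [tR, tInv, ← tp_add, add_neg_cancel, tp_zero]

def tUnit : R3ˣ := ⟨tR, tInv, tR_mul_tInv, by rw [mul_comm, tR_mul_tInv]⟩

lemma val_tUnit_zpow (k : ℤ) : ((tUnit ^ k : R3ˣ) : R3) = tp k := by
  induction k using Int.induction_on with
  | zero => rw [zpow_zero, Units.val_one, tp_zero]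
  | succ n ih => rw [zpow_add_one, Units.val_mul, ih, tp_add]; rfl
  | pred n ih => rw [zpow_sub_one, Units.val_mul, ih, sub_eq_add_neg, tp_add]; rfl

lemma DR_tp (k : ℤ) : DR (tp k) = ((k : R3) * tp (k - 1)) • DR tR := by
  rw [← val_tUnit_zpow, ← val_tUnit_zpow]
  exact DR.leibniz_units_zpow tUnit k

lemma uR_sq : uR ^ 2 = tR * (tR + 4) := by
  have h : uR ^ 2 = tp 2 + 4 * tp 1 := by
    have hmk : AdjoinRoot.mk threePoly
        (X ^ 2 - C (LaurentPolynomial.T 2 + 4 * LaurentPolynomial.T 1)) = 0 :=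
      AdjoinRoot.mk_self
    rwa [map_sub, map_pow, AdjoinRoot.mk_X, AdjoinRoot.mk_C, sub_eq_zero, map_add, map_mul,
      map_ofNat] at hmk
  rw [h, show (2 : ℤ) = 1 + 1 from rfl, tp_add, tR]
  ring

lemma uR_smul_DR_uR : uR • DR uR = (tR + 2) • DR tR := by
  have h := congrArg DR uR_sq
  rw [Derivation.leibniz_pow, Derivation.leibniz, map_add,
    show (4 : R3) = ((4 : ℕ) : R3) from rfl, Derivation.map_natCast, add_zero, pow_one,
    ← add_smul] at h
  have h2 : (2 : ℂ) • (uR • DR uR) = (2 : ℂ) • ((tR + 2) • DR tR) := by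
    rw [two_smul, two_smul, ← two_nsmul, ← two_nsmul, h, two_nsmul, ← add_smul]
    congr 1
    ring
  exact smul_right_injective _ two_ne_zero h2

lemma DR_tp_mul_uR_pow_three (k : ℤ) :
    DR (tp k * uR ^ 3) = (((4 * k + 6 : ℤ) : R3) * tp k * uR) • DR tR +
      (((k + 3 : ℤ) : R3) * tp (k + 1) * uR) • DR tR := by
  have hu : uR ^ (3 - 1) • DR uR = (uR * (tR + 2)) • DR tR := by
    rw [pow_two, mul_smul, uR_smul_DR_uR, smul_smul]
  have ht : tp (k - 1) * tR = tp k := by rw [tR, ← tp_add, sub_add_cancel]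
  rw [Derivation.leibniz, Derivation.leibniz_pow, hu, DR_tp, ← Nat.cast_smul_eq_nsmul R3,
    smul_smul, smul_smul, smul_smul, ← add_smul, ← add_smul, tp_add k 1, ← tR]
  refine congrArg (· • DR tR) ?_
  push_cast
  linear_combination (↑k * tp (k - 1) * uR) * uR_sq + (↑k * uR * (tR + 4)) * ht

theorem clsR_tp_mul_uR_recurrence (k : ℤ) :
    clsR ((((4 * k + 6 : ℤ) : R3) * tp k * uR) • DR tR) =
      clsR ((((-(k + 3) : ℤ) : R3) * tp (k + 1) * uR) • DR tR) := by
  rw [clsR, clsR, Submodule.Quotient.eq, Int.cast_neg, neg_mul, neg_mul, neg_smul,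
    sub_neg_eq_add, ← DR_tp_mul_uR_pow_three]
  exact LinearMap.mem_range_self _ _

lemma clsR_intCast_mul_smul (c : ℤ) (x : R3) (v : ΩR) :
    clsR (((c : R3) * x) • v) = (c : ℂ) • clsR (x • v) := by
  rw [mul_smul, Int.cast_smul_eq_zsmul, Int.cast_smul_eq_zsmul]
  exact map_zsmul dRsub.mkQ c _

/-- For every integer `k`, `(4k+6)·t^k u dt ≡ -(k+3)·t^{k+1} u dt` modulo `dR`; consequently the
class of `t^{-k} u dt` in `Ω_R/dR` is zero for every `k ≥ 3`. -/
theorem stmt_14 :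
    (∀ k : ℤ, clsR ((((4 * k + 6 : ℤ) : R3) * tp k * uR) • DR tR) =
      clsR ((((-(k + 3) : ℤ) : R3) * tp (k + 1) * uR) • DR tR)) ∧
    (∀ k : ℤ, 3 ≤ k → clsR ((tp (-k) * uR) • DR tR) = 0) := by
  refine ⟨clsR_tp_mul_uR_recurrence, fun k hk ↦ ?_⟩
  refine eq_zero_of_smul_recurrence (K := ℂ) (fun m ↦ clsR ((tp m * uR) • DR tR)) (fun m ↦ ?_)
    (-k) (by omega)
  simpa only [mul_assoc, clsR_intCast_mul_smul] using clsR_tp_mul_uR_recurrence m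

end
end

section
/- There exists a unique ℂ-linear derivation D of R satisfying D(t) = u and D(u) = t + 2; moreover this derivation satisfies D(t^{-1}) = -t^{-2}u and D(t^{-1}u) = -2t^{-1}. -/
noncomputable section

set_option synthInstance.maxHeartbeats 1000000
set_option maxHeartbeats 1000000

open Polynomial

/-! A derivation `D` of a commutative algebra `A` is the same thing as an algebra section
`a ↦ a + D(a) ε` of the projection `A[ε] → A`. An algebra map out of `R` is determined by the images
of `t` and `u` (the image of `t⁻¹` is forced), so such a derivation is unique. It exists because
`t ↦ t + u ε`, `u ↦ u + (t + 2) ε` respects the defining relation: `t + u ε` is a unit, and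
`(u + (t + 2) ε)² = (t + u ε)² + 4 (t + u ε)` is `u² = t² + 4t` together with its derivative
`2u (t + 2) = (2t + 4) u`. The values at `t⁻¹` and `t⁻¹ u` then follow from the Leibniz rule and
`u² = t² + 4t`. -/

open TrivSqZeroExt LaurentPolynomial

namespace Derivation

variable {R A M : Type*} [CommSemiring R] [CommSemiring A] [Algebra R A] [AddCommMonoid M]
  [Module A M] [Module Aᵐᵒᵖ M] [IsCentralScalar A M] [Module R M] [IsScalarTower R A M]

def ofSection (f : A →ₐ[R] TrivSqZeroExt A M) (hf : ∀ a, (f a).fst = a) : Derivation R A M where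
  toFun a := (f a).snd
  map_add' a b := by simp only [map_add, snd_add]
  map_smul' r a := by rw [RingHom.id_apply, AlgHom.map_smul_of_tower, snd_smul]
  map_one_eq_zero' := show (f 1).snd = 0 by rw [map_one, snd_one]
  leibniz' a b := show (f (a * b)).snd = a • (f b).snd + b • (f a).snd by
    rw [map_mul, snd_mul, hf, hf, op_smul_eq_smul, add_comm]

@[simp]
theorem ofSection_apply (f : A →ₐ[R] TrivSqZeroExt A M) (hf : ∀ a, (f a).fst = a) (a : A) :
    ofSection f hf a = (f a).snd :=
  rfl

def toTrivSqZeroExt (D : Derivation R A M) : A →ₐ[R] TrivSqZeroExt A M where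
  toFun a := inl a + inr (D a)
  map_one' := by ext <;> simp
  map_mul' a b := by ext <;> simp [op_smul_eq_smul, add_comm]
  map_zero' := by ext <;> simp
  map_add' a b := by ext <;> simp [add_add_add_comm]
  commutes' r := by ext <;> simp [algebraMap_eq_inl']

@[simp]
theorem toTrivSqZeroExt_apply (D : Derivation R A M) (a : A) :
    D.toTrivSqZeroExt a = inl a + inr (D a) :=
  rfl

theorem toTrivSqZeroExt_injective :
    Function.Injective (toTrivSqZeroExt : Derivation R A M → A →ₐ[R] TrivSqZeroExt A M) :=
  fun D₁ D₂ h => Derivation.ext fun a => by simpa using congr(($h a).snd)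

end Derivation

theorem LaurentPolynomial.algHom_ext {R B : Type*} [CommSemiring R] [Semiring B] [Algebra R B]
    {f g : LaurentPolynomial R →ₐ[R] B} (h : f (T 1) = g (T 1)) : f = g :=
  AlgHom.coe_ringHom_injective <| IsLocalization.ringHom_ext (Submonoid.powers (X : R[X])) <|
    Polynomial.ringHom_ext
      (fun r => by
        simp only [RingHom.comp_apply, algebraMap_eq_toLaurent, Polynomial.toLaurent_C,
          C_eq_algebraMap, RingHom.coe_coe, AlgHom.commutes])
      (by simpa using h)

namespace R3

theorem tp_add (m n : ℤ) : tp (m + n) = tp m * tp n := by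
  rw [tp, tp, tp, T_add, map_mul]

theorem tR_mul_tInv : tR * tInv = 1 := by
  rw [tR, tInv, ← tp_add, add_neg_cancel, tp, T_zero, map_one]

theorem uR_sq : uR ^ 2 = tR ^ 2 + 4 * tR := by
  have h : AdjoinRoot.mk threePoly (X ^ 2 - Polynomial.C (T 2 + 4 * T 1)) = 0 :=
    AdjoinRoot.mk_self
  rw [map_sub, map_pow, AdjoinRoot.mk_X, AdjoinRoot.mk_C, sub_eq_zero] at h
  rw [uR, h, tR, sq, ← tp_add]
  simp [tp, map_ofNat]

theorem algHom_ext {S : Type*} [Semiring S] [Algebra ℂ S] {f g : R3 →ₐ[ℂ] S}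
    (ht : f tR = g tR) (hu : f uR = g uR) : f = g :=
  AdjoinRoot.algHom_ext' (LaurentPolynomial.algHom_ext ht) hu

theorem derivation_ext {D₁ D₂ : Derivation ℂ R3 R3} (ht : D₁ tR = D₂ tR) (hu : D₁ uR = D₂ uR) :
    D₁ = D₂ :=
  Derivation.toTrivSqZeroExt_injective <| algHom_ext (by simp [ht]) (by simp [hu])

theorem isUnit_inl_tR_add_inr_uR : IsUnit (inl tR + inr uR : DualNumber R3) :=
  isUnit_iff_isUnit_fst.mpr <| by simpa using IsUnit.of_mul_eq_one _ tR_mul_tInv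

def laurentLift : LaurentPolynomial ℂ →ₐ[ℂ] DualNumber R3 where
  __ := LaurentPolynomial.eval₂ (algebraMap ℂ _) isUnit_inl_tR_add_inr_uR.unit
  commutes' r := by simp [← LaurentPolynomial.C_eq_algebraMap]

theorem laurentLift_T (n : ℕ) : laurentLift (T n) = (inl tR + inr uR) ^ n := by
  simp [laurentLift]

theorem eval₂_laurentLift_threePoly :
    threePoly.eval₂ laurentLift (inl uR + inr (tR + 2)) = 0 := by
  have hT1 : laurentLift (T 1) = inl tR + inr uR := by simpa using laurentLift_T 1
  have hT2 : laurentLift (T 2) = (inl tR + inr uR) ^ 2 := laurentLift_T 2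
  simp only [threePoly]
  rw [Polynomial.eval₂_sub, Polynomial.eval₂_pow, Polynomial.eval₂_X, Polynomial.eval₂_C,
    RingHom.coe_coe, map_add, map_mul, map_ofNat, hT1, hT2]
  -- `fst` and `snd` have simp lemmas for casts of naturals, but not for numerals
  rw [← Nat.cast_ofNat (R := DualNumber R3) (n := 4)]
  ext <;> simp [uR_sq, -Nat.cast_ofNat] <;> ring

def dualSection : R3 →ₐ[ℂ] DualNumber R3 :=
  AdjoinRoot.liftAlgHom threePoly laurentLift _ eval₂_laurentLift_threePoly

theorem dualSection_tR : dualSection tR = inl tR + inr uR := by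
  simpa [dualSection, tR, tp] using laurentLift_T 1

theorem dualSection_uR : dualSection uR = inl uR + inr (tR + 2) := by
  simp [dualSection, uR]

theorem fst_dualSection (x : R3) : (dualSection x).fst = x := by
  suffices (fstHom ℂ R3 R3).comp dualSection = AlgHom.id ℂ R3 from congr($this x)
  exact algHom_ext (by simp [dualSection_tR]) (by simp [dualSection_uR])

def derivation : Derivation ℂ R3 R3 :=
  Derivation.ofSection dualSection fst_dualSection

theorem derivation_tR : derivation tR = uR := by
  simp [derivation, dualSection_tR]

theorem derivation_uR : derivation uR = tR + 2 := by
  simp [derivation, dualSection_uR]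

variable (E : Derivation ℂ R3 R3)

theorem apply_tInv (ht : E tR = uR) : E tInv = -(tInv ^ 2 * uR) := by
  rw [E.leibniz_of_mul_eq_one ((mul_comm _ _).trans tR_mul_tInv), ht, smul_eq_mul, neg_mul]

theorem apply_tInv_mul_uR (ht : E tR = uR) (hu : E uR = tR + 2) :
    E (tInv * uR) = -(2 * tInv) := by
  rw [E.leibniz, hu, apply_tInv E ht, smul_eq_mul, smul_eq_mul]
  linear_combination (-tInv ^ 2) * uR_sq - (tR * tInv + 4 * tInv) * tR_mul_tInv

end R3

/-- There exists a unique `ℂ`-linear derivation `D` of `R` with `D(t) = u` and `D(u) = t + 2`;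
moreover this derivation satisfies `D(t⁻¹) = -t⁻²u` and `D(t⁻¹u) = -2t⁻¹`. -/
theorem stmt_15 :
    (∃! E : Derivation ℂ R3 R3, E tR = uR ∧ E uR = tR + 2) ∧
    (∀ E : Derivation ℂ R3 R3, E tR = uR → E uR = tR + 2 →
      E tInv = -(tInv ^ 2 * uR) ∧ E (tInv * uR) = -(2 * tInv)) :=
  ⟨⟨R3.derivation, ⟨R3.derivation_tR, R3.derivation_uR⟩, fun _ ⟨ht, hu⟩ =>
      R3.derivation_ext (ht.trans R3.derivation_tR.symm) (hu.trans R3.derivation_uR.symm)⟩,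
    fun E ht hu => ⟨R3.apply_tInv E ht, R3.apply_tInv_mul_uR E ht hu⟩⟩

end
end
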